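/- Let R be a Γ-graded integral domain and let S be a quasi-compact subspace of HStar_f(R) (the space of finite-type homogeneous star operations with the Zariski topology). Then the infimum ⋀(S), defined by A^{⋀(S)} = ⋂_{⋆∈S} A^⋆, is again a finite-type homogeneous star operation. -/

import Mathlib

/-!
The infimum of star operations is computed idealwise, `A ↦ ⋂ A^⋆`; it is again a homogeneous
star operation because homogeneous fractional ideals are closed under taking homogeneous
components. For finite type, let `x ∈ A^⋆` for every `⋆ ∈ S`. Each `⋆` reaches `x` through a
finitely generated homogeneous `B_⋆ ⊆ A`. Since `x` has a homogeneous denominator, `x ∈ B^⋆`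
amounts to finitely many conditions `c ∈ B^⋆` with `c` homogeneous, and `c ∈ B^⋆ ↔ 1 ∈ (c⁻¹B)^⋆`;
so `{⋆' | x ∈ B^⋆'}` is open. Quasi-compactness of `S` leaves finitely many `B_⋆`, and their sum
is a finitely generated homogeneous `B ⊆ A` with `x ∈ B^⋆` for all `⋆ ∈ S`.
-/

open FractionalIdeal
open scoped Classical

section Setup

variable {Γ : Type*} [AddCommMonoid Γ] [LinearOrder Γ] [IsOrderedCancelAddMonoid Γ] [DecidableEq Γ]
  {R : Type*} [CommRing R] [IsDomain R]
  (𝒜 : Γ → AddSubgroup R) [GradedRing 𝒜]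
  (K : Type*) [Field K] [Algebra R K] [IsFractionRing R K]

/-- The integral ideal corresponding to a fractional ideal contained in `R`. -/
def idealOf (J : FractionalIdeal (nonZeroDivisors R) K) : Ideal R :=
  (J : Submodule R K).comap (Algebra.linearMap R K)

/-- An integral ideal is homogeneous if it contains all homogeneous components of its elements. -/
def IsHomIdeal (I : Ideal R) : Prop := ∀ f ∈ I, ∀ γ : Γ, GradedRing.proj 𝒜 γ f ∈ I

/-- `C(I)`: the homogeneous ideal generated by the homogeneous components of elements of `I`. -/
def homC (I : Ideal R) : Ideal R :=
  Ideal.span {x | ∃ f ∈ I, ∃ γ : Γ, x = GradedRing.proj 𝒜 γ f}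

/-- `C(J)` for a fractional ideal `J ⊆ R`, as a fractional ideal. -/
def Cfrac (J : FractionalIdeal (nonZeroDivisors R) K) : FractionalIdeal (nonZeroDivisors R) K :=
  ↑(homC 𝒜 (idealOf K J))

/-- A fractional ideal is homogeneous if some nonzero homogeneous `s ∈ R` multiplies it into a
homogeneous integral ideal. -/
def IsHomFrac (A : FractionalIdeal (nonZeroDivisors R) K) : Prop :=
  ∃ s : R, s ≠ 0 ∧ SetLike.IsHomogeneousElem 𝒜 s ∧
    spanSingleton (nonZeroDivisors R) (algebraMap R K s) * A ≤ 1 ∧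
    IsHomIdeal 𝒜 (idealOf K (spanSingleton (nonZeroDivisors R) (algebraMap R K s) * A))

/-- A homogeneous element of the homogeneous quotient field, viewed inside `K`. -/
def IsHomElem (x : K) : Prop :=
  ∃ a b : R, SetLike.IsHomogeneousElem 𝒜 a ∧ SetLike.IsHomogeneousElem 𝒜 b ∧ b ≠ 0 ∧
    x * algebraMap R K b = algebraMap R K a

end Setup

/-- A homogeneous star operation on the graded domain `R`. -/
structure HomStarOp {Γ : Type*} [AddCommMonoid Γ] [LinearOrder Γ] [IsOrderedCancelAddMonoid Γ] [DecidableEq Γ]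
    {R : Type*} [CommRing R] [IsDomain R] (𝒜 : Γ → AddSubgroup R) [GradedRing 𝒜]
    (K : Type*) [Field K] [Algebra R K] [IsFractionRing R K] where
  toFun : FractionalIdeal (nonZeroDivisors R) K → FractionalIdeal (nonZeroDivisors R) K
  hom : ∀ A, A ≠ 0 → IsHomFrac 𝒜 K A → IsHomFrac 𝒜 K (toFun A)
  map_span : ∀ x : K, x ≠ 0 → IsHomElem 𝒜 K x →
    toFun (spanSingleton (nonZeroDivisors R) x) = spanSingleton (nonZeroDivisors R) x
  map_smul : ∀ x : K, x ≠ 0 → IsHomElem 𝒜 K x → ∀ A, A ≠ 0 → IsHomFrac 𝒜 K A →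
    toFun (spanSingleton (nonZeroDivisors R) x * A) = spanSingleton (nonZeroDivisors R) x * toFun A
  le_star : ∀ A, A ≠ 0 → IsHomFrac 𝒜 K A → A ≤ toFun A
  mono : ∀ A B, A ≠ 0 → B ≠ 0 → IsHomFrac 𝒜 K A → IsHomFrac 𝒜 K B → A ≤ B → toFun A ≤ toFun B
  idem : ∀ A, A ≠ 0 → IsHomFrac 𝒜 K A → toFun (toFun A) = toFun A

/-- A classical star operation on the domain `R`. -/
structure StarOp (R : Type*) [CommRing R] [IsDomain R]
    (K : Type*) [Field K] [Algebra R K] [IsFractionRing R K] where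
  toFun : FractionalIdeal (nonZeroDivisors R) K → FractionalIdeal (nonZeroDivisors R) K
  map_span : ∀ x : K, x ≠ 0 →
    toFun (spanSingleton (nonZeroDivisors R) x) = spanSingleton (nonZeroDivisors R) x
  map_smul : ∀ x : K, x ≠ 0 → ∀ A, A ≠ 0 →
    toFun (spanSingleton (nonZeroDivisors R) x * A) = spanSingleton (nonZeroDivisors R) x * toFun A
  le_star : ∀ A, A ≠ 0 → A ≤ toFun A
  mono : ∀ A B, A ≠ 0 → B ≠ 0 → A ≤ B → toFun A ≤ toFun B
  idem : ∀ A, A ≠ 0 → toFun (toFun A) = toFun A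

section EStar

variable {Γ : Type*} [AddCommMonoid Γ] [LinearOrder Γ] [IsOrderedCancelAddMonoid Γ] [DecidableEq Γ]
  {R : Type*} [CommRing R] [IsDomain R]
  (𝒜 : Γ → AddSubgroup R) [GradedRing 𝒜]
  (K : Type*) [Field K] [Algebra R K] [IsFractionRing R K]

/-- The submodule `⋂ { z⁻¹ (C(zA))^⋆ : 0 ≠ z ∈ (R : A) }`. -/
def eStarSub (s : HomStarOp 𝒜 K) (A : FractionalIdeal (nonZeroDivisors R) K) : Submodule R K :=
  ⨅ z ∈ {z : K | z ≠ 0 ∧ spanSingleton (nonZeroDivisors R) z * A ≤ 1},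
    ↑(spanSingleton (nonZeroDivisors R) z⁻¹ *
      s.toFun (Cfrac 𝒜 K (spanSingleton (nonZeroDivisors R) z * A)))

/-- The extension `e(⋆)` of a homogeneous star operation `⋆`,
`A^{e(⋆)} := ⋂ { z⁻¹ (C(zA))^⋆ : 0 ≠ z ∈ (R : A) }` (which is a fractional ideal whenever
`A` is a nonzero fractional ideal). -/
noncomputable def eStar (s : HomStarOp 𝒜 K) (A : FractionalIdeal (nonZeroDivisors R) K) :
    FractionalIdeal (nonZeroDivisors R) K :=
  if h : IsFractional (nonZeroDivisors R) (eStarSub 𝒜 K s A) then ⟨_, h⟩ else 0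

end EStar


/-- `A^{★_f}` as a set: the union of `B^★` over finitely generated `B ⊆ A`. -/
def finTypeSet {R : Type*} [CommRing R] [IsDomain R]
    (K : Type*) [Field K] [Algebra R K] [IsFractionRing R K]
    (t : FractionalIdeal (nonZeroDivisors R) K → FractionalIdeal (nonZeroDivisors R) K)
    (A : FractionalIdeal (nonZeroDivisors R) K) : Set K :=
  ⋃ B ∈ {B : FractionalIdeal (nonZeroDivisors R) K |
      B ≠ 0 ∧ B ≤ A ∧ (B : Submodule R K).FG}, {x : K | x ∈ t B}

/-- `A^{⋆_f}` as a set: the union of `B^⋆` over finitely generated homogeneous `B ⊆ A`. -/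
def homFinTypeSet {Γ : Type*} [AddCommMonoid Γ] [LinearOrder Γ] [IsOrderedCancelAddMonoid Γ] [DecidableEq Γ]
    {R : Type*} [CommRing R] [IsDomain R]
    (𝒜 : Γ → AddSubgroup R) [GradedRing 𝒜]
    (K : Type*) [Field K] [Algebra R K] [IsFractionRing R K]
    (t : FractionalIdeal (nonZeroDivisors R) K → FractionalIdeal (nonZeroDivisors R) K)
    (A : FractionalIdeal (nonZeroDivisors R) K) : Set K :=
  ⋃ B ∈ {B : FractionalIdeal (nonZeroDivisors R) K |
      B ≠ 0 ∧ B ≤ A ∧ IsHomFrac 𝒜 K B ∧ (B : Submodule R K).FG}, {x : K | x ∈ t B}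

/-- A homogeneous star operation is of finite type if
`A^⋆ = ⋃ {B^⋆ : B ⊆ A finitely generated homogeneous}`. -/
def IsFiniteTypeHomStar {Γ : Type*} [AddCommMonoid Γ] [LinearOrder Γ] [IsOrderedCancelAddMonoid Γ] [DecidableEq Γ]
    {R : Type*} [CommRing R] [IsDomain R]
    (𝒜 : Γ → AddSubgroup R) [GradedRing 𝒜]
    (K : Type*) [Field K] [Algebra R K] [IsFractionRing R K]
    (u : HomStarOp 𝒜 K) : Prop :=
  ∀ A : FractionalIdeal (nonZeroDivisors R) K, A ≠ 0 → IsHomFrac 𝒜 K A →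
    {x : K | x ∈ u.toFun A} = homFinTypeSet 𝒜 K u.toFun A

section Preliminaries

variable {R : Type*} [CommRing R] {K : Type*} [Field K] [Algebra R K]

local notation "σ" => spanSingleton (nonZeroDivisors R)

theorem coeIdeal_idealOf {J : FractionalIdeal (nonZeroDivisors R) K} (hJ : J ≤ 1) :
    ((idealOf K J : Ideal R) : FractionalIdeal (nonZeroDivisors R) K) = J := by
  ext x
  refine ⟨fun hx => ?_, fun hx => ?_⟩
  · obtain ⟨y, hy, rfl⟩ := (mem_coeIdeal _).mp hx
    exact hy
  · obtain ⟨r, rfl⟩ := (mem_one_iff _).mp (hJ hx)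
    exact (mem_coeIdeal _).mpr ⟨r, hx, rfl⟩

theorem FractionalIdeal.ne_zero_of_le {A B : FractionalIdeal (nonZeroDivisors R) K} (hA : A ≠ 0)
    (hAB : A ≤ B) : B ≠ 0 :=
  fun hB => hA (le_antisymm (hB ▸ hAB) (zero_le _))

theorem FractionalIdeal.fg_finset_sup {ι : Type*} (T : Finset ι)
    {B : ι → FractionalIdeal (nonZeroDivisors R) K}
    (hB : ∀ i ∈ T, (B i : Submodule R K).FG) :
    ((T.sup B : FractionalIdeal (nonZeroDivisors R) K) : Submodule R K).FG :=
  Finset.sup_induction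
    (p := fun C : FractionalIdeal (nonZeroDivisors R) K => (C : Submodule R K).FG)
    (by simpa using Submodule.fg_bot)
    (fun _ h₁ _ h₂ => by rw [coe_sup]; exact h₁.sup h₂) hB

variable [IsFractionRing R K]

theorem idealOf_coeIdeal (I : Ideal R) :
    idealOf K (I : FractionalIdeal (nonZeroDivisors R) K) = I :=
  Submodule.comap_map_eq_of_injective (IsFractionRing.injective R K) I

theorem IsFractionRing.algebraMap_ne_zero {r : R} (hr : r ≠ 0) : algebraMap R K r ≠ 0 :=
  (map_ne_zero_iff _ (IsFractionRing.injective R K)).mpr hr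

theorem FractionalIdeal.mem_spanSingleton_mul_iff {x y : K} (hx : x ≠ 0)
    {J : FractionalIdeal (nonZeroDivisors R) K} : y ∈ σ x * J ↔ x⁻¹ * y ∈ J := by
  rw [mem_singleton_mul]
  refine ⟨?_, fun h => ⟨_, h, (mul_inv_cancel_left₀ hx y).symm⟩⟩
  rintro ⟨z, hz, rfl⟩
  rwa [inv_mul_cancel_left₀ hx]

theorem FractionalIdeal.spanSingleton_mul_ne_zero {x : K} (hx : x ≠ 0)
    {J : FractionalIdeal (nonZeroDivisors R) K} (hJ : J ≠ 0) : σ x * J ≠ 0 := by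
  intro h
  apply hJ
  rw [← one_mul J, ← spanSingleton_one, ← inv_mul_cancel₀ hx,
    ← spanSingleton_mul_spanSingleton, mul_assoc, h, mul_zero]

theorem isHomElem_inv {Γ : Type*} {𝒜 : Γ → AddSubgroup R} {x : K} (hx : x ≠ 0)
    (h : IsHomElem 𝒜 K x) : IsHomElem 𝒜 K x⁻¹ := by
  obtain ⟨a, b, ha, hb, hb0, hxb⟩ := h
  have haK : algebraMap R K a ≠ 0 :=
    hxb ▸ mul_ne_zero hx (IsFractionRing.algebraMap_ne_zero hb0)
  refine ⟨b, a, hb, ha, fun h => haK (by rw [h, map_zero]), ?_⟩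
  rw [← hxb]
  field_simp

end Preliminaries

section HomogeneousFractionalIdeals

variable {Γ : Type*} [AddCommMonoid Γ] [DecidableEq Γ] {R : Type*} [CommRing R]
  {𝒜 : Γ → AddSubgroup R} [GradedRing 𝒜]

theorem isHomIdeal_iff_isHomogeneous {I : Ideal R} : IsHomIdeal 𝒜 I ↔ I.IsHomogeneous 𝒜 :=
  ⟨fun h γ _ hf => h _ hf γ, fun h _ hf γ => h γ hf⟩

theorem Ideal.isHomogeneous_span_singleton {s : R} (hs : SetLike.IsHomogeneousElem 𝒜 s) :
    (Ideal.span {s}).IsHomogeneous 𝒜 :=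
  Ideal.homogeneous_span 𝒜 {s} (by simpa using hs)

variable {K : Type*} [Field K] [Algebra R K] [IsFractionRing R K]

local notation "σ" => spanSingleton (nonZeroDivisors R)

theorem isHomFrac_iff {A : FractionalIdeal (nonZeroDivisors R) K} :
    IsHomFrac 𝒜 K A ↔ ∃ s : R, s ≠ 0 ∧ SetLike.IsHomogeneousElem 𝒜 s ∧
      ∃ I : Ideal R, I.IsHomogeneous 𝒜 ∧ σ (algebraMap R K s) * A = I := by
  constructor
  · rintro ⟨s, hs0, hs, hle, hI⟩
    exact ⟨s, hs0, hs, _, isHomIdeal_iff_isHomogeneous.mp hI, (coeIdeal_idealOf hle).symm⟩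
  · rintro ⟨s, hs0, hs, I, hI, hsA⟩
    refine ⟨s, hs0, hs, hsA ▸ coeIdeal_le_one, ?_⟩
    rwa [hsA, idealOf_coeIdeal, isHomIdeal_iff_isHomogeneous]

theorem isHomFrac_zero [Nontrivial R] :
    IsHomFrac 𝒜 K (0 : FractionalIdeal (nonZeroDivisors R) K) :=
  isHomFrac_iff.mpr ⟨1, one_ne_zero, SetLike.isHomogeneousElem_one 𝒜, ⊥,
    Ideal.IsHomogeneous.bot 𝒜, by rw [mul_zero, coeIdeal_bot]⟩

variable [IsDomain R]

theorem IsHomFrac.add {A B : FractionalIdeal (nonZeroDivisors R) K}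
    (hA : IsHomFrac 𝒜 K A) (hB : IsHomFrac 𝒜 K B) : IsHomFrac 𝒜 K (A + B) := by
  obtain ⟨s, hs0, hs, I, hI, hsA⟩ := isHomFrac_iff.mp hA
  obtain ⟨t, ht0, ht, J, hJ, htB⟩ := isHomFrac_iff.mp hB
  refine isHomFrac_iff.mpr ⟨s * t, mul_ne_zero hs0 ht0, hs.mul ht,
    Ideal.span {t} * I ⊔ Ideal.span {s} * J,
    ((Ideal.isHomogeneous_span_singleton ht).mul hI).sup
      ((Ideal.isHomogeneous_span_singleton hs).mul hJ), ?_⟩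
  calc σ (algebraMap R K (s * t)) * (A + B)
      = σ (algebraMap R K t) * (σ (algebraMap R K s) * A) +
          σ (algebraMap R K s) * (σ (algebraMap R K t) * B) := by
        rw [map_mul, ← spanSingleton_mul_spanSingleton]; ring
    _ = _ := by
        rw [hsA, htB, coeIdeal_sup, coeIdeal_mul, coeIdeal_mul, coeIdeal_span_singleton,
          coeIdeal_span_singleton]

theorem IsHomFrac.spanSingleton_mul {x : K} (hx : IsHomElem 𝒜 K x)
    {A : FractionalIdeal (nonZeroDivisors R) K} (hA : IsHomFrac 𝒜 K A) :
    IsHomFrac 𝒜 K (σ x * A) := by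
  obtain ⟨a, b, ha, hb, hb0, hxb⟩ := hx
  obtain ⟨s, hs0, hs, I, hI, hsA⟩ := isHomFrac_iff.mp hA
  refine isHomFrac_iff.mpr ⟨s * b, mul_ne_zero hs0 hb0, hs.mul hb, Ideal.span {a} * I,
    (Ideal.isHomogeneous_span_singleton ha).mul hI, ?_⟩
  calc σ (algebraMap R K (s * b)) * (σ x * A)
      = σ (x * algebraMap R K b) * (σ (algebraMap R K s) * A) := by
        rw [map_mul, ← spanSingleton_mul_spanSingleton, ← spanSingleton_mul_spanSingleton]; ring
    _ = _ := by rw [hxb, hsA, coeIdeal_mul, coeIdeal_span_singleton]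

theorem isHomFrac_finset_sup {ι : Type*} (T : Finset ι)
    {B : ι → FractionalIdeal (nonZeroDivisors R) K} (hB : ∀ i ∈ T, IsHomFrac 𝒜 K (B i)) :
    IsHomFrac 𝒜 K (T.sup B) :=
  Finset.sup_induction isHomFrac_zero (fun A hA B hB => by rw [sup_eq_add]; exact hA.add hB) hB

end HomogeneousFractionalIdeals

section Components

variable {Γ : Type*} [AddCommMonoid Γ] [IsLeftCancelAdd Γ] [DecidableEq Γ]
  {R : Type*} [CommRing R] {𝒜 : Γ → AddSubgroup R} [GradedRing 𝒜]
  {K : Type*} [Field K] [Algebra R K] [IsFractionRing R K]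

local notation "σ" => spanSingleton (nonZeroDivisors R)

theorem IsHomFrac.inv_mul_decompose_mem {J : FractionalIdeal (nonZeroDivisors R) K}
    (hJ : IsHomFrac 𝒜 K J) {s : R} (hs : SetLike.IsHomogeneousElem 𝒜 s) {r : R} {x : K}
    (hx : x ∈ J) (hxr : algebraMap R K s * x = algebraMap R K r) (γ : Γ) :
    (algebraMap R K s)⁻¹ * algebraMap R K (DirectSum.decompose 𝒜 r γ : R) ∈ J := by
  obtain ⟨t, ht0, ⟨d, htd⟩, I, hI, htJ⟩ := isHomFrac_iff.mp hJ
  have htx : algebraMap R K t * x ∈ σ (algebraMap R K t) * J :=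
    mem_singleton_mul.mpr ⟨x, hx, rfl⟩
  rw [htJ] at htx
  obtain ⟨i, hi, hix⟩ := (mem_coeIdeal _).mp htx
  -- `t r = s i` lies in the homogeneous ideal `s I`, hence so does its component
  -- `(t r)_{d + γ} = t r_γ`; writing `t r_γ = s j` with `j ∈ I = t J` gives `r_γ / s ∈ J`.
  have htr : t * r ∈ Ideal.span {s} * I := by
    have : t * r = s * i := IsFractionRing.injective R K (by
      rw [map_mul, map_mul, hix, ← hxr]; ring)
    exact this ▸ Ideal.mul_mem_mul (Ideal.mem_span_singleton_self s) hi
  have hcomp := ((Ideal.isHomogeneous_span_singleton hs).mul hI) (d + γ) htr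
  let _ : AddLeftCancelMonoid Γ := { ‹AddCommMonoid Γ›, ‹IsLeftCancelAdd Γ› with }
  rw [DirectSum.coe_decompose_mul_add_of_left_mem 𝒜 htd] at hcomp
  obtain ⟨j, hj, hsj⟩ := Ideal.mem_span_singleton_mul.mp hcomp
  have hjJ : algebraMap R K j ∈ (I : FractionalIdeal (nonZeroDivisors R) K) :=
    (mem_coeIdeal _).mpr ⟨j, hj, rfl⟩
  rw [← htJ] at hjJ
  obtain ⟨y, hy, hjy⟩ := mem_singleton_mul.mp hjJ
  rcases eq_or_ne s 0 with rfl | hs0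
  · simpa using J.zero_mem
  convert hy using 1
  have hsjK := congrArg (algebraMap R K) hsj
  rw [map_mul, map_mul, hjy] at hsjK
  rw [inv_mul_eq_iff_eq_mul₀ (IsFractionRing.algebraMap_ne_zero hs0)]
  exact mul_left_cancel₀ (IsFractionRing.algebraMap_ne_zero ht0) (by rw [← hsjK]; ring)

theorem IsHomFrac.mem_iff_forall_decompose_mem {J : FractionalIdeal (nonZeroDivisors R) K}
    (hJ : IsHomFrac 𝒜 K J) {s : R} (hs : SetLike.IsHomogeneousElem 𝒜 s) (hs0 : s ≠ 0)
    {r : R} {x : K} (hxr : algebraMap R K s * x = algebraMap R K r) :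
    x ∈ J ↔ ∀ γ ∈ (DirectSum.decompose 𝒜 r).support,
      (algebraMap R K s)⁻¹ * algebraMap R K (DirectSum.decompose 𝒜 r γ : R) ∈ J := by
  refine ⟨fun hx γ _ => hJ.inv_mul_decompose_mem hs hx hxr γ, fun h => ?_⟩
  have hx : x = ∑ γ ∈ (DirectSum.decompose 𝒜 r).support,
      (algebraMap R K s)⁻¹ * algebraMap R K (DirectSum.decompose 𝒜 r γ : R) := by
    rw [← Finset.mul_sum, ← map_sum, DirectSum.sum_support_decompose 𝒜 r, ← hxr,
      inv_mul_cancel_left₀ (IsFractionRing.algebraMap_ne_zero hs0)]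
  exact hx ▸ Submodule.sum_mem _ h

end Components

section Infimum

variable {Γ : Type*} [AddCommMonoid Γ] [LinearOrder Γ] [IsOrderedCancelAddMonoid Γ]
  [DecidableEq Γ] {R : Type*} [CommRing R] [IsDomain R]
  {𝒜 : Γ → AddSubgroup R} [GradedRing 𝒜]
  {K : Type*} [Field K] [Algebra R K] [IsFractionRing R K]
  {ι : Type*} [Nonempty ι] (u : ι → HomStarOp 𝒜 K)

local notation "σ" => spanSingleton (nonZeroDivisors R)

noncomputable def HomStarOp.iInfFun (A : FractionalIdeal (nonZeroDivisors R) K) :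
    FractionalIdeal (nonZeroDivisors R) K :=
  ⟨⨅ i, ((u i).toFun A : Submodule R K),
    isFractional_of_le (iInf_le _ (Classical.arbitrary ι))⟩

namespace HomStarOp

theorem mem_iInfFun {A : FractionalIdeal (nonZeroDivisors R) K} {x : K} :
    x ∈ iInfFun u A ↔ ∀ i, x ∈ (u i).toFun A :=
  Submodule.mem_iInf _

theorem le_iInfFun {A B : FractionalIdeal (nonZeroDivisors R) K} :
    B ≤ iInfFun u A ↔ ∀ i, B ≤ (u i).toFun A := by
  simp only [SetLike.le_def, mem_iInfFun]
  exact ⟨fun h i x hx => h hx i, fun h x hx i => h i hx⟩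

theorem iInfFun_le (i : ι) (A : FractionalIdeal (nonZeroDivisors R) K) :
    iInfFun u A ≤ (u i).toFun A :=
  (le_iInfFun u).mp le_rfl i

theorem isHomFrac_iInfFun {A : FractionalIdeal (nonZeroDivisors R) K} (hA0 : A ≠ 0)
    (hA : IsHomFrac 𝒜 K A) : IsHomFrac 𝒜 K (iInfFun u A) := by
  obtain ⟨s, hs0, hs, hle, -⟩ := (u (Classical.arbitrary ι)).hom A hA0 hA
  refine ⟨s, hs0, hs, (mul_le_mul_right (iInfFun_le u _ A) _).trans hle, fun f hf γ => ?_⟩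
  obtain ⟨x, hx, hfx⟩ := mem_singleton_mul.mp hf
  have hγ : (algebraMap R K s)⁻¹ * algebraMap R K (DirectSum.decompose 𝒜 f γ : R) ∈
      iInfFun u A := (mem_iInfFun u).mpr fun i =>
    ((u i).hom A hA0 hA).inv_mul_decompose_mem hs ((mem_iInfFun u).mp hx i) hfx.symm γ
  rw [GradedRing.proj_apply]
  exact mem_singleton_mul.mpr
    ⟨_, hγ, (mul_inv_cancel_left₀ (IsFractionRing.algebraMap_ne_zero hs0) _).symm⟩

theorem iInfFun_spanSingleton {x : K} (hx : x ≠ 0) (hxh : IsHomElem 𝒜 K x) :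
    iInfFun u (σ x) = σ x := by
  ext y
  simp only [mem_iInfFun, (u _).map_span x hx hxh, forall_const]

theorem iInfFun_spanSingleton_mul {x : K} (hx : x ≠ 0) (hxh : IsHomElem 𝒜 K x)
    {A : FractionalIdeal (nonZeroDivisors R) K} (hA0 : A ≠ 0) (hA : IsHomFrac 𝒜 K A) :
    iInfFun u (σ x * A) = σ x * iInfFun u A := by
  ext y
  simp only [mem_iInfFun, (u _).map_smul x hx hxh A hA0 hA, mem_spanSingleton_mul_iff hx]

theorem le_iInfFun_self {A : FractionalIdeal (nonZeroDivisors R) K} (hA0 : A ≠ 0)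
    (hA : IsHomFrac 𝒜 K A) : A ≤ iInfFun u A :=
  (le_iInfFun u).mpr fun i => (u i).le_star A hA0 hA

theorem iInfFun_mono {A B : FractionalIdeal (nonZeroDivisors R) K} (hA0 : A ≠ 0) (hB0 : B ≠ 0)
    (hA : IsHomFrac 𝒜 K A) (hB : IsHomFrac 𝒜 K B) (hAB : A ≤ B) :
    iInfFun u A ≤ iInfFun u B :=
  (le_iInfFun u).mpr fun i => (iInfFun_le u i A).trans ((u i).mono A B hA0 hB0 hA hB hAB)

theorem iInfFun_iInfFun {A : FractionalIdeal (nonZeroDivisors R) K} (hA0 : A ≠ 0)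
    (hA : IsHomFrac 𝒜 K A) : iInfFun u (iInfFun u A) = iInfFun u A := by
  have hI0 : iInfFun u A ≠ 0 := ne_zero_of_le hA0 (le_iInfFun_self u hA0 hA)
  have hI := isHomFrac_iInfFun u hA0 hA
  refine le_antisymm ((le_iInfFun u).mpr fun i => ?_) (le_iInfFun_self u hI0 hI)
  calc iInfFun u (iInfFun u A) ≤ (u i).toFun (iInfFun u A) := iInfFun_le u i _
    _ ≤ (u i).toFun ((u i).toFun A) := (u i).mono _ _ hI0
        (ne_zero_of_le hA0 ((u i).le_star A hA0 hA)) hI ((u i).hom A hA0 hA) (iInfFun_le u i A)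
    _ = (u i).toFun A := (u i).idem A hA0 hA

noncomputable def iInf : HomStarOp 𝒜 K where
  toFun := iInfFun u
  hom _ := isHomFrac_iInfFun u
  map_span _ := iInfFun_spanSingleton u
  map_smul _ hx hxh _ := iInfFun_spanSingleton_mul u hx hxh
  le_star _ := le_iInfFun_self u
  mono _ _ := iInfFun_mono u
  idem _ := iInfFun_iInfFun u

end HomStarOp

end Infimum

section ZariskiTopology

variable {Γ : Type*} [AddCommMonoid Γ] [LinearOrder Γ] [IsOrderedCancelAddMonoid Γ]
  [DecidableEq Γ] {R : Type*} [CommRing R] [IsDomain R]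
  {𝒜 : Γ → AddSubgroup R} [GradedRing 𝒜]
  {K : Type*} [Field K] [Algebra R K] [IsFractionRing R K]

local notation "σ" => spanSingleton (nonZeroDivisors R)

/-- The Zariski topology of `HStar(R)`, with subbasic open sets `W_A`. -/
instance : TopologicalSpace (HomStarOp 𝒜 K) :=
  .generateFrom {U | ∃ A : FractionalIdeal (nonZeroDivisors R) K,
    A ≠ 0 ∧ IsHomFrac 𝒜 K A ∧ U = {t : HomStarOp 𝒜 K | (1 : K) ∈ t.toFun A}}

namespace HomStarOp

theorem isOpen_setOf_mem_of_isHomElem {c : K} (hc : IsHomElem 𝒜 K c)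
    {B : FractionalIdeal (nonZeroDivisors R) K} (hB0 : B ≠ 0) (hB : IsHomFrac 𝒜 K B) :
    IsOpen {t : HomStarOp 𝒜 K | c ∈ t.toFun B} := by
  rcases eq_or_ne c 0 with rfl | hc0
  · simpa only [FractionalIdeal.zero_mem, Set.ofPred_true] using isOpen_univ
  have hc' := isHomElem_inv hc0 hc
  have hW : {t : HomStarOp 𝒜 K | c ∈ t.toFun B} =
      {t | (1 : K) ∈ t.toFun (σ c⁻¹ * B)} := by
    ext t
    rw [Set.mem_ofPred_eq, Set.mem_ofPred_eq, t.map_smul _ (inv_ne_zero hc0) hc' B hB0 hB,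
      mem_spanSingleton_mul_iff (inv_ne_zero hc0), inv_inv, mul_one]
  rw [hW]
  exact TopologicalSpace.GenerateOpen.basic _ ⟨_, spanSingleton_mul_ne_zero (inv_ne_zero hc0) hB0,
    hB.spanSingleton_mul hc', rfl⟩

theorem isOpen_setOf_mem {s : R} (hs : SetLike.IsHomogeneousElem 𝒜 s) (hs0 : s ≠ 0) {r : R}
    {x : K} (hxr : algebraMap R K s * x = algebraMap R K r)
    {B : FractionalIdeal (nonZeroDivisors R) K} (hB0 : B ≠ 0) (hB : IsHomFrac 𝒜 K B) :
    IsOpen {t : HomStarOp 𝒜 K | x ∈ t.toFun B} := by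
  have hV : {t : HomStarOp 𝒜 K | x ∈ t.toFun B} =
      ⋂ γ ∈ (DirectSum.decompose 𝒜 r).support, {t : HomStarOp 𝒜 K |
        (algebraMap R K s)⁻¹ * algebraMap R K (DirectSum.decompose 𝒜 r γ : R) ∈
          t.toFun B} := by
    ext t
    simp only [Set.mem_ofPred_eq, Set.mem_iInter₂]
    exact (t.hom B hB0 hB).mem_iff_forall_decompose_mem hs hs0 hxr
  rw [hV]
  refine isOpen_biInter_finset fun γ _ => isOpen_setOf_mem_of_isHomElem ?_ hB0 hB
  exact ⟨_, s, ⟨γ, (DirectSum.decompose 𝒜 r γ).2⟩, hs, hs0,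
    by rw [mul_right_comm, inv_mul_cancel₀ (IsFractionRing.algebraMap_ne_zero hs0), one_mul]⟩

end HomStarOp

end ZariskiTopology

section FiniteType

variable {Γ : Type*} [AddCommMonoid Γ] [LinearOrder Γ] [IsOrderedCancelAddMonoid Γ]
  [DecidableEq Γ] {R : Type*} [CommRing R] [IsDomain R]
  {𝒜 : Γ → AddSubgroup R} [GradedRing 𝒜]
  {K : Type*} [Field K] [Algebra R K] [IsFractionRing R K]

theorem HomStarOp.homFinTypeSet_subset (t : HomStarOp 𝒜 K)
    {A : FractionalIdeal (nonZeroDivisors R) K} (hA0 : A ≠ 0) (hA : IsHomFrac 𝒜 K A) :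
    homFinTypeSet 𝒜 K t.toFun A ⊆ {x : K | x ∈ t.toFun A} :=
  Set.iUnion₂_subset fun B ⟨hB0, hBA, hB, _⟩ => t.mono B A hB0 hA0 hB hA hBA

theorem exists_fg_forall_mem_toFun_of_isCompact {ι : Type*} [Nonempty ι]
    {u : ι → HomStarOp 𝒜 K} (hu : ∀ i, IsFiniteTypeHomStar 𝒜 K (u i))
    (hc : IsCompact (Set.range u)) {A : FractionalIdeal (nonZeroDivisors R) K} (hA0 : A ≠ 0)
    (hA : IsHomFrac 𝒜 K A) {x : K} (hx : ∀ i, x ∈ (u i).toFun A) :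
    ∃ B : FractionalIdeal (nonZeroDivisors R) K, B ≠ 0 ∧ B ≤ A ∧ IsHomFrac 𝒜 K B ∧
      (B : Submodule R K).FG ∧ ∀ i, x ∈ (u i).toFun B := by
  have hfin : ∀ i, ∃ B : FractionalIdeal (nonZeroDivisors R) K,
      (B ≠ 0 ∧ B ≤ A ∧ IsHomFrac 𝒜 K B ∧ (B : Submodule R K).FG) ∧
        x ∈ (u i).toFun B := by
    intro i
    have hxf : x ∈ homFinTypeSet 𝒜 K (u i).toFun A := hu i A hA0 hA ▸ hx i
    simpa only [homFinTypeSet, Set.mem_iUnion, Set.mem_ofPred_eq, exists_prop] using hxf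
  choose B hB hxB using hfin
  obtain ⟨i₀⟩ := ‹Nonempty ι›
  -- `x ∈ (u i₀).toFun A` has a homogeneous denominator `s`, which makes each
  -- `{t | x ∈ t.toFun (B i)}` open.
  obtain ⟨s, hs0, hs, hsA, -⟩ := (u i₀).hom A hA0 hA
  obtain ⟨r, hr⟩ := (mem_one_iff _).mp (hsA (mem_singleton_mul.mpr ⟨x, hx i₀, rfl⟩))
  obtain ⟨T, hT⟩ := hc.elim_finite_subcover
    (fun i => {t : HomStarOp 𝒜 K | x ∈ t.toFun (B i)})
    (fun i => HomStarOp.isOpen_setOf_mem hs hs0 hr.symm (hB i).1 (hB i).2.2.1)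
    (Set.range_subset_iff.mpr fun i => Set.mem_iUnion.mpr ⟨i, hxB i⟩)
  have hcover : ∀ i, ∃ j ∈ T, x ∈ (u i).toFun (B j) := fun i => by
    simpa only [Set.mem_iUnion, Set.mem_ofPred_eq, exists_prop] using hT (Set.mem_range_self i)
  obtain ⟨j₀, hj₀, -⟩ := hcover i₀
  have hTB0 : T.sup B ≠ 0 := ne_zero_of_le (hB j₀).1 (Finset.le_sup hj₀)
  have hTB : IsHomFrac 𝒜 K (T.sup B) := isHomFrac_finset_sup T fun j _ => (hB j).2.2.1
  refine ⟨T.sup B, hTB0, Finset.sup_le fun j _ => (hB j).2.1, hTB,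
    fg_finset_sup T fun j _ => (hB j).2.2.2, fun i => ?_⟩
  obtain ⟨j, hj, hxj⟩ := hcover i
  exact (u i).mono _ _ (hB j).1 hTB0 (hB j).2.2.1 hTB (Finset.le_sup hj) hxj

theorem IsFiniteTypeHomStar.iInf {ι : Type*} [Nonempty ι] {u : ι → HomStarOp 𝒜 K}
    (hu : ∀ i, IsFiniteTypeHomStar 𝒜 K (u i)) (hc : IsCompact (Set.range u)) :
    IsFiniteTypeHomStar 𝒜 K (HomStarOp.iInf u) := by
  intro A hA0 hA
  refine subset_antisymm (fun x hx => ?_) ((HomStarOp.iInf u).homFinTypeSet_subset hA0 hA)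
  obtain ⟨B, hB0, hBA, hB, hBfg, hxB⟩ := exists_fg_forall_mem_toFun_of_isCompact hu hc hA0 hA
    ((HomStarOp.mem_iInfFun u).mp hx)
  exact Set.mem_biUnion (x := B) ⟨hB0, hBA, hB, hBfg⟩ ((HomStarOp.mem_iInfFun u).mpr hxB)

end FiniteType

/-- the infimum of a quasi-compact (nonempty) subspace of `HStar_f(R)` is again a
finite-type homogeneous star operation. -/
theorem stmt_16
    {Γ : Type*} [AddCommMonoid Γ] [LinearOrder Γ] [IsOrderedCancelAddMonoid Γ] [DecidableEq Γ]
    {R : Type*} [CommRing R] [IsDomain R]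
    (𝒜 : Γ → AddSubgroup R) [GradedRing 𝒜]
    (K : Type*) [Field K] [Algebra R K] [IsFractionRing R K]
    (S : Set {u : HomStarOp 𝒜 K // IsFiniteTypeHomStar 𝒜 K u}) (hS : S.Nonempty) :
    letI : TopologicalSpace (HomStarOp 𝒜 K) := TopologicalSpace.generateFrom
      {U | ∃ A : FractionalIdeal (nonZeroDivisors R) K, A ≠ 0 ∧ IsHomFrac 𝒜 K A ∧
        U = {t : HomStarOp 𝒜 K | (1 : K) ∈ t.toFun A}}
    IsCompact S →
    ∃ t : HomStarOp 𝒜 K, IsFiniteTypeHomStar 𝒜 K t ∧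
      (∀ A : FractionalIdeal (nonZeroDivisors R) K, A ≠ 0 → IsHomFrac 𝒜 K A →
        {x : K | x ∈ t.toFun A} = ⋂ u ∈ S, {x : K | x ∈ u.1.toFun A}) := by
  intro hC
  have : Nonempty S := hS.to_subtype
  have hc : IsCompact (Set.range fun u : S => u.1.1) := by
    rw [← Set.image_eq_range]
    exact hC.image continuous_subtype_val
  refine ⟨HomStarOp.iInf fun u : S => u.1.1, IsFiniteTypeHomStar.iInf (fun u => u.1.2) hc,
    fun A _ _ => ?_⟩
  ext x
  simp only [Set.mem_ofPred_eq, Set.mem_iInter₂, HomStarOp.iInf, HomStarOp.mem_iInfFun,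
    Subtype.forall]
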